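/- The area functional F(x¹, x²) = [(x₁¹x₂² − x₁²x₂¹)² + (x₁¹x₃² − x₁²x₃¹)² + (x₂¹x₃² − x₂²x₃¹)²]^(1/2) on pairs of vectors in ℝ³ is its own Legendre transform: at any point x where F is differentiable (i.e., where F(x) ≠ 0), letting y = F'(x), one has ⟨x, y⟩ − F(x) = F(y), where ⟨x,y⟩ = Σ_{n,k} x_n^k y_k^n and F(y) is the same expression applied to the 2×3 matrix y (via the corresponding three 2×2 minors). -/

import Mathlib

/-!
Let `c = x¹ × x²`; its coordinates are `minors32 x` up to the sign of the middle one, so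
`F(x) = |c|`. Since `F` is homogeneous of degree `2`, Euler's identity gives
`⟨x, F'(x)⟩ = 2 F(x)`. With `ν = c / |c|` the rows of `y = F'(x)` are `x² × ν` and `ν × x¹`,
and by `(a × b) × (a × d) = ⟨a, b × d⟩ a` their cross product is `⟨ν, c⟩ ν = c`,
so `F(y) = F(x)`.
-/

attribute [local instance] Matrix.normedAddCommGroup Matrix.normedSpace

/-- The three `2×2` minors (at indices `0, 1, 2`) of a `3×2` matrix. -/
def minors32 (x : Matrix (Fin 3) (Fin 2) ℝ) : Fin 3 → ℝ :=
  ![x 1 0 * x 2 1 - x 1 1 * x 2 0,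
    x 0 0 * x 2 1 - x 0 1 * x 2 0,
    x 0 0 * x 1 1 - x 0 1 * x 1 0]

namespace AreaFunctional

variable (x : Matrix (Fin 3) (Fin 2) ℝ)

def areaSq : ℝ := minors32 x 0 ^ 2 + minors32 x 1 ^ 2 + minors32 x 2 ^ 2

noncomputable def area : ℝ := √(areaSq x)

/-- Columns `2 x² × c` and `2 c × x¹`, where `c = x¹ × x²`. -/
def gradAreaSq : Matrix (Fin 3) (Fin 2) ℝ :=
  (2 : ℝ) •
    !![minors32 x 1 * x 2 1 + minors32 x 2 * x 1 1, -minors32 x 1 * x 2 0 - minors32 x 2 * x 1 0;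
       minors32 x 0 * x 2 1 - minors32 x 2 * x 0 1, -minors32 x 0 * x 2 0 + minors32 x 2 * x 0 0;
       -minors32 x 0 * x 1 1 - minors32 x 1 * x 0 1, minors32 x 0 * x 1 0 + minors32 x 1 * x 0 0]

noncomputable def gradArea : Matrix (Fin 3) (Fin 2) ℝ := (2 * area x)⁻¹ • gradAreaSq x

lemma sq_area : area x ^ 2 = areaSq x := Real.sq_sqrt (by unfold areaSq; positivity)

lemma areaSq_ne_zero {x : Matrix (Fin 3) (Fin 2) ℝ} (hx : area x ≠ 0) : areaSq x ≠ 0 := by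
  rw [← sq_area]; exact pow_ne_zero 2 hx

lemma minors32_smul (r : ℝ) : minors32 (r • x) = r ^ 2 • minors32 x := by
  ext i
  fin_cases i <;>
    simp only [minors32, Matrix.smul_apply, Pi.smul_apply, smul_eq_mul, Matrix.cons_val_zero,
      Matrix.cons_val_one, Matrix.cons_val, Fin.zero_eta, Fin.mk_one, Fin.reduceFinMk] <;>
    ring

lemma minors32_gradAreaSq : minors32 (gradAreaSq x) = (4 * areaSq x) • minors32 x := by
  ext i
  fin_cases i <;>
    simp only [minors32, gradAreaSq, areaSq, Matrix.smul_apply, Matrix.of_apply, Pi.smul_apply,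
      smul_eq_mul, Matrix.cons_val', Matrix.cons_val_zero, Matrix.cons_val_one, Matrix.cons_val,
      Matrix.cons_val_fin_one, Fin.zero_eta, Fin.mk_one, Fin.reduceFinMk] <;>
    ring

lemma sum_mul_gradAreaSq : ∑ n, ∑ k, x n k * gradAreaSq x n k = 4 * areaSq x := by
  simp only [Fin.sum_univ_three, Fin.sum_univ_two, gradAreaSq, areaSq, minors32, Matrix.smul_apply,
    Matrix.of_apply, smul_eq_mul, Matrix.cons_val', Matrix.cons_val_zero, Matrix.cons_val_one,
    Matrix.cons_val, Matrix.cons_val_fin_one]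
  ring

lemma sum_mul_gradArea : ∑ n, ∑ k, x n k * gradArea x n k = 2 * area x := by
  simp only [gradArea, Matrix.smul_apply, smul_eq_mul, mul_left_comm _ (2 * area x)⁻¹,
    ← Finset.mul_sum, sum_mul_gradAreaSq, ← sq_area]
  field_simp
  ring

lemma minors32_gradArea {x : Matrix (Fin 3) (Fin 2) ℝ} (hx : area x ≠ 0) :
    minors32 (gradArea x) = minors32 x := by
  rw [gradArea, minors32_smul, minors32_gradAreaSq, smul_smul, ← sq_area]
  convert one_smul ℝ (minors32 x)
  field_simp
  ring

lemma hasLineDerivAt_areaSq (v : Matrix (Fin 3) (Fin 2) ℝ) :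
    HasLineDerivAt ℝ areaSq (∑ n, ∑ k, gradAreaSq x n k * v n k) x v := by
  have hentry (i : Fin 3) (j : Fin 2) :
      HasDerivAt (fun t : ℝ => (x + t • v) i j) (v i j) 0 := by
    simpa using ((hasDerivAt_id (0 : ℝ)).mul_const (v i j)).const_add (x i j)
  have hm0 := ((hentry 1 0).mul (hentry 2 1)).sub ((hentry 1 1).mul (hentry 2 0))
  have hm1 := ((hentry 0 0).mul (hentry 2 1)).sub ((hentry 0 1).mul (hentry 2 0))
  have hm2 := ((hentry 0 0).mul (hentry 1 1)).sub ((hentry 0 1).mul (hentry 1 0))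
  have h : HasLineDerivAt ℝ areaSq _ x v := ((hm0.pow 2).add (hm1.pow 2)).add (hm2.pow 2)
  refine h.congr_deriv ?_
  simp only [Nat.cast_ofNat, Matrix.add_apply, Matrix.smul_apply, smul_eq_mul, Pi.sub_apply,
    Pi.mul_apply, zero_mul, add_zero, Nat.add_one_sub_one, pow_one, zero_smul, Matrix.zero_apply,
    gradAreaSq, minors32, Matrix.cons_val_one, Matrix.cons_val_zero, Matrix.cons_val,
    Matrix.of_apply, Matrix.cons_val', Matrix.cons_val_fin_one, Fin.sum_univ_three,
    Fin.sum_univ_two]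
  ring

lemma differentiableAt_area {x : Matrix (Fin 3) (Fin 2) ℝ} (hx : area x ≠ 0) :
    DifferentiableAt ℝ area x := by
  have hentry (i : Fin 3) (j : Fin 2) :
      Differentiable ℝ (fun z : Matrix (Fin 3) (Fin 2) ℝ => z i j) :=
    (LinearMap.toContinuousLinearMap (Matrix.entryLinearMap ℝ ℝ i j)).differentiable
  refine DifferentiableAt.sqrt ?_ (areaSq_ne_zero hx)
  unfold areaSq
  simp only [minors32, Matrix.cons_val_zero, Matrix.cons_val_one, Matrix.cons_val_two,
    Matrix.head_cons, Matrix.tail_cons]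
  fun_prop

lemma fderiv_area_single {x : Matrix (Fin 3) (Fin 2) ℝ} (hx : area x ≠ 0)
    (n : Fin 3) (k : Fin 2) :
    fderiv ℝ area x (Matrix.single n k 1) = gradArea x n k := by
  have h : HasLineDerivAt ℝ area _ x (Matrix.single n k 1) :=
    (hasLineDerivAt_areaSq x (Matrix.single n k 1)).sqrt (by simpa using areaSq_ne_zero hx)
  calc fderiv ℝ area x (Matrix.single n k 1) = lineDeriv ℝ area x (Matrix.single n k 1) :=
        (differentiableAt_area hx).lineDeriv_eq_fderiv.symm
    _ = gradArea x n k := by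
      rw [h.lineDeriv]
      simp [Matrix.single_apply, ite_and, gradArea, area, div_eq_inv_mul]

end AreaFunctional

/-- The area functional `F(x¹,x²) = (Δ₃² + Δ₂² + Δ₁²)^{1/2}` on pairs of vectors in
`ℝ³` is its own Legendre transform: at any point `x` where `F(x) ≠ 0`, letting
`y = F'(x)` (a `2×3` matrix), one has `⟨x,y⟩ - F(x) = F(y)`, where `F(y)` is the same
expression applied to the three `2×2` minors of `y`. -/
theorem area_functional_self_dual
    (x : Matrix (Fin 3) (Fin 2) ℝ)
    (hx : Real.sqrt ((minors32 x 0) ^ 2 + (minors32 x 1) ^ 2 + (minors32 x 2) ^ 2) ≠ 0)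
    (y : Matrix (Fin 2) (Fin 3) ℝ)
    (hy : ∀ k n, y k n =
      fderiv ℝ (fun z : Matrix (Fin 3) (Fin 2) ℝ =>
          Real.sqrt ((minors32 z 0) ^ 2 + (minors32 z 1) ^ 2 + (minors32 z 2) ^ 2)) x
        (Matrix.single n k 1))
    (D : Fin 3 → ℝ)
    (hD1 : D 0 = y 0 1 * y 1 2 - y 1 1 * y 0 2)
    (hD2 : D 1 = y 0 0 * y 1 2 - y 1 0 * y 0 2)
    (hD3 : D 2 = y 0 0 * y 1 1 - y 1 0 * y 0 1) :
    (∑ n, ∑ k, x n k * y k n)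
        - Real.sqrt ((minors32 x 0) ^ 2 + (minors32 x 1) ^ 2 + (minors32 x 2) ^ 2)
      = Real.sqrt ((D 0) ^ 2 + (D 1) ^ 2 + (D 2) ^ 2) := by
  have hyT : y.transpose = AreaFunctional.gradArea x :=
    Matrix.ext fun n k => (hy k n).trans (AreaFunctional.fderiv_area_single hx n k)
  have hD : D = minors32 y.transpose := by
    ext i; fin_cases i <;> simp [minors32, hD1, hD2, hD3]
  have hpair : ∑ n, ∑ k, x n k * y k n = 2 * AreaFunctional.area x := by
    rw [← AreaFunctional.sum_mul_gradArea, ← hyT]; rfl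
  rw [hpair, hD, hyT, AreaFunctional.minors32_gradArea hx]
  show _ - AreaFunctional.area x = AreaFunctional.area x
  ring
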